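/- Let n be a positive integer, s coprime to n, C = S^s, and D diagonal with unit-modulus entries a_i. With B the diagonal matrix B_{k,k} = λ_0^k / ∏_{l=0}^{k−1} a_{sl} (λ_0 an n-th root of ∏ a_i), F the unitary Fourier matrix F_{k,l} = ω^{kl}/√n, and Π_s the permutation matrix with (Π_s)_{si,i} = 1, the matrix U = Π_s B F is unitary and U* (DC) U is the diagonal matrix with (j,j) entry ω^j λ_0. -/

import Mathlib

open Matrix

/-- `ω n = e^{2πi/n}`. -/
noncomputable def omg (n : ℕ) : ℂ := Complex.exp (2 * Real.pi * Complex.I / n)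

/-- The cyclic shift matrix: `S_{i,j} = 1` iff `i + 1 = j` in `ZMod n`. -/
noncomputable def Smat (n : ℕ) : Matrix (ZMod n) (ZMod n) ℂ :=
  Matrix.of fun i j => if i + 1 = j then 1 else 0

/-- The diagonal matrix `R` with `R_{j,j} = ω^j`. -/
noncomputable def Rmat (n : ℕ) : Matrix (ZMod n) (ZMod n) ℂ :=
  Matrix.diagonal fun j => omg n ^ (j.val)

/-- The permutation matrix `Π_s`, with `(Π_s)_{s i, i} = 1`. -/
noncomputable def Pmat (n : ℕ) (s : ℕ) : Matrix (ZMod n) (ZMod n) ℂ :=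
  Matrix.of fun i j => if i = (s : ZMod n) * j then 1 else 0

/-- The unitary Fourier matrix `F_{k,l} = ω^{kl}/√n`. -/
noncomputable def Fmat (n : ℕ) : Matrix (ZMod n) (ZMod n) ℂ :=
  Matrix.of fun k l => omg n ^ (k.val * l.val) / Real.sqrt n

/-!
Writing `C = S ^ s`, the permutation `Π_s` intertwines the shifts, `S ^ s Π_s = Π_s S`, and moves
`D` to `D' = diag (a (s k))`. The diagonal `B` gauges `D' S` into `λ₀ S`: its entries solve
`a (s k) b (k + 1) = λ₀ b k`, a recursion that closes up around the cycle because `λ₀ ^ n = ∏ a`.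
Finally `F` diagonalises the shift, `S F = F R` with `R = diag (ω ^ j)`, so `D C U = U (λ₀ R)`.
-/

open Finset

namespace Matrix

variable {ι : Type*} [Fintype ι] [DecidableEq ι]

theorem permMatrix_mem_unitaryGroup {R : Type*} [CommRing R] [StarRing R] (σ : Equiv.Perm ι) :
    σ.permMatrix R ∈ unitaryGroup ι R := by
  rw [mem_unitaryGroup_iff', star_eq_conjTranspose, conjTranspose_permMatrix, ← permMatrix_mul,
    mul_inv_cancel, permMatrix_one]

theorem diagonal_mem_unitaryGroup {𝕜 : Type*} [RCLike 𝕜] {d : ι → 𝕜} (hd : ∀ i, ‖d i‖ = 1) :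
    diagonal d ∈ unitaryGroup ι 𝕜 := by
  rw [mem_unitaryGroup_iff', star_eq_conjTranspose, diagonal_conjTranspose, diagonal_mul_diagonal,
    ← diagonal_one]
  congr 1
  ext i
  simp [RCLike.conj_mul, hd]

end Matrix

namespace ZMod

variable {n : ℕ} [NeZero n]

@[to_additive]
theorem prod_val_eq_prod_range {M : Type*} [CommMonoid M] (g : ℕ → M) :
    ∏ x : ZMod n, g x.val = ∏ l ∈ range n, g l :=
  prod_nbij' val (↑) (fun x _ => mem_range.2 x.val_lt) (fun _ _ => mem_univ _)
    (fun x _ => by simp) (fun l hl => val_cast_of_lt (mem_range.1 hl)) (fun _ _ => rfl)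

theorem sum_pow_val {K : Type*} [Field K] [DecidableEq K] {z : K} (hz : z ^ n = 1) :
    ∑ m : ZMod n, z ^ m.val = if z = 1 then (n : K) else 0 := by
  rw [sum_val_eq_sum_range]
  split_ifs with h
  · simp [h]
  · rw [geom_sum_eq h, hz, sub_self, zero_div]

theorem prod_comp_mul_left {M : Type*} [CommMonoid M] {s : ℕ} (hs : s.Coprime n)
    (f : ZMod n → M) : ∏ x, f (s * x) = ∏ x, f x := by
  simpa [coe_unitOfCoprime] using Equiv.prod_comp (Units.mulLeft (unitOfCoprime s hs)) f

end ZMod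

section Fourier

variable (n : ℕ) [NeZero n]

theorem omg_isPrimitiveRoot : IsPrimitiveRoot (omg n) n :=
  Complex.isPrimitiveRoot_exp n (NeZero.ne n)

theorem Fmat_mem_unitaryGroup : Fmat n ∈ unitaryGroup (ZMod n) ℂ := by
  have hω := omg_isPrimitiveRoot n
  have hω0 : omg n ≠ 0 := hω.ne_zero (NeZero.ne n)
  have hconj : (starRingEnd ℂ) (omg n) = (omg n)⁻¹ :=
    (Complex.inv_eq_conj (hω.norm'_eq_one (NeZero.ne n))).symm
  have hsqrt : (Real.sqrt n : ℂ) * Real.sqrt n = n := by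
    rw [← Complex.ofReal_mul, Real.mul_self_sqrt n.cast_nonneg, Complex.ofReal_natCast]
  rw [mem_unitaryGroup_iff']
  ext k l
  set z := (omg n)⁻¹ ^ k.val * omg n ^ l.val with hzdef
  have hz : z ^ n = 1 := by
    rw [mul_pow, ← pow_mul, ← pow_mul, mul_comm k.val, mul_comm l.val, pow_mul, pow_mul,
      inv_pow, hω.pow_eq_one]
    simp
  have hz1 : z = 1 ↔ k = l := by
    rw [hzdef, inv_pow, inv_mul_eq_one₀ (pow_ne_zero _ hω0)]
    exact ⟨fun h => ZMod.val_injective n (hω.pow_inj k.val_lt l.val_lt h), by rintro rfl; rfl⟩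
  have hterm : ∀ m : ZMod n, star (Fmat n m k) * Fmat n m l = z ^ m.val / n := fun m => by
    simp only [Fmat, of_apply, star_div₀, star_pow, RCLike.star_def, hconj, Complex.conj_ofReal]
    rw [div_mul_div_comm, hsqrt, mul_pow, ← pow_mul, ← pow_mul, mul_comm m.val, mul_comm m.val]
  simp only [mul_apply, star_apply, hterm, ← sum_div, ZMod.sum_pow_val hz, hz1, one_apply]
  split_ifs <;> simp [NeZero.ne n]

theorem Smat_mul_Fmat : Smat n * Fmat n = Fmat n * Rmat n := by
  ext k l
  have hval : (((k + 1).val * l.val : ℕ) : ZMod n) = (k.val * l.val + l.val : ℕ) := by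
    push_cast [ZMod.natCast_val, ZMod.cast_id]
    ring
  rw [Rmat, mul_diagonal]
  simp only [mul_apply, Smat, Fmat, of_apply, ite_mul, one_mul, zero_mul, sum_ite_eq, mem_univ,
    if_true]
  rw [pow_eq_pow_of_modEq ((ZMod.natCast_eq_natCast_iff _ _ _).1 hval)
    (omg_isPrimitiveRoot n).pow_eq_one, pow_add, div_mul_eq_mul_div]

end Fourier

section Shift

variable {n : ℕ} [NeZero n]

theorem Smat_pow_apply (s : ℕ) (i j : ZMod n) :
    (Smat n ^ s) i j = if i + s = j then 1 else 0 := by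
  induction s generalizing j with
  | zero => simp [one_apply]
  | succ m ih =>
    rw [pow_succ, mul_apply, sum_eq_single (j - 1)]
    · rw [ih]
      simp only [Smat, of_apply, sub_add_cancel, if_true, mul_one, Nat.cast_succ, ← add_assoc,
        eq_sub_iff_add_eq]
    · intro k _ hk
      simp [Smat, eq_sub_iff_add_eq.not.1 hk]
    · exact fun h => absurd (mem_univ _) h

theorem Smat_pow_mul_Pmat (s : ℕ) : Smat n ^ s * Pmat n s = Pmat n s * Smat n := by
  ext i j
  simp only [mul_apply, Smat_pow_apply]
  simp only [Pmat, Smat, of_apply, mul_ite, mul_one, mul_zero, ← eq_sub_iff_add_eq,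
    sum_ite_eq', mem_univ, if_true, mul_sub]

theorem diagonal_mul_Pmat (s : ℕ) (a : ZMod n → ℂ) :
    diagonal a * Pmat n s = Pmat n s * diagonal fun k => a (s * k) := by
  ext i j
  by_cases h : i = s * j <;> simp [Pmat, h]

theorem Pmat_mem_unitaryGroup {s : ℕ} (hs : s.Coprime n) :
    Pmat n s ∈ unitaryGroup (ZMod n) ℂ := by
  convert permMatrix_mem_unitaryGroup (Units.mulLeft (ZMod.unitOfCoprime s hs)).symm
  ext i j
  simp [Pmat, PEquiv.toMatrix_apply, Units.inv_mul_eq_iff_eq_mul, ZMod.coe_unitOfCoprime]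

theorem diagonal_mul_Smat_mul_diagonal {c b : ZMod n → ℂ} {μ : ℂ}
    (h : ∀ k, c k * b (k + 1) = μ * b k) :
    diagonal c * Smat n * diagonal b = μ • (diagonal b * Smat n) := by
  ext i j
  by_cases hij : i + 1 = j
  · subst hij; simp [Smat, h]
  · simp [Smat, hij]

theorem diagonal_mul_Smat_pow_mul_eq_mul_smul_Rmat {s : ℕ} (a : ZMod n → ℂ) {b : ZMod n → ℂ}
    {μ : ℂ} (h : ∀ k, a (s * k) * b (k + 1) = μ * b k) :
    diagonal a * Smat n ^ s * (Pmat n s * diagonal b * Fmat n) =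
      Pmat n s * diagonal b * Fmat n * (μ • Rmat n) :=
  calc diagonal a * Smat n ^ s * (Pmat n s * diagonal b * Fmat n)
      = diagonal a * (Smat n ^ s * Pmat n s) * diagonal b * Fmat n := by
        simp only [Matrix.mul_assoc]
    _ = Pmat n s * (diagonal (fun k => a (s * k)) * Smat n * diagonal b) * Fmat n := by
        rw [Smat_pow_mul_Pmat, ← Matrix.mul_assoc, diagonal_mul_Pmat]
        simp only [Matrix.mul_assoc]
    _ = μ • (Pmat n s * diagonal b * (Smat n * Fmat n)) := by
        rw [diagonal_mul_Smat_mul_diagonal h]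
        simp only [Matrix.mul_smul, Matrix.smul_mul, Matrix.mul_assoc]
    _ = Pmat n s * diagonal b * Fmat n * (μ • Rmat n) := by
        rw [Smat_mul_Fmat]
        simp only [Matrix.mul_smul, Matrix.mul_assoc]

end Shift

section TwistedPow

variable {n : ℕ} [NeZero n]

/-- The solution of `c k * b (k + 1) = μ * b k` with `b 0 = 1`; it is consistent around the cycle
`ZMod n` exactly when `μ ^ n = ∏ x, c x`. -/
def twistedPow {K : Type*} [Field K] (c : ZMod n → K) (μ : K) (k : ℕ) : K :=
  μ ^ k / ∏ l ∈ range k, c l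

theorem mul_twistedPow_val_add_one {K : Type*} [Field K] {c : ZMod n → K} (hc : ∀ x, c x ≠ 0)
    {μ : K} (hμ : μ ^ n = ∏ x, c x) (k : ZMod n) :
    c k * twistedPow c μ (k + 1).val = μ * twistedPow c μ k.val := by
  unfold twistedPow
  have hprod : ∀ m, ∏ l ∈ range m, c l ≠ 0 := fun m => prod_ne_zero_iff.2 fun _ _ => hc _
  have hval : (k + 1).val = (k.val + 1) % n := by
    rw [ZMod.val_add, ZMod.val_one_eq_one_mod, Nat.add_mod_mod]
  rcases (show k.val + 1 ≤ n from k.val_lt).lt_or_eq with hlt | heq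
  · rw [hval, Nat.mod_eq_of_lt hlt, prod_range_succ, ZMod.natCast_zmod_val, pow_succ]
    field_simp [hc k, hprod]
  · have htotal : ∏ x, c x = ∏ l ∈ range (k.val + 1), c l := by
      rw [heq]
      simpa using ZMod.prod_val_eq_prod_range (n := n) fun l => c l
    rw [hval, heq, Nat.mod_self, pow_zero, range_zero, prod_empty, div_one, mul_one,
      mul_div_assoc', ← pow_succ', heq, hμ, htotal, prod_range_succ, ZMod.natCast_zmod_val]
    field_simp [hprod]

theorem norm_twistedPow {K : Type*} [NormedField K] {c : ZMod n → K} (hc : ∀ x, ‖c x‖ = 1)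
    {μ : K} (hμ : μ ^ n = ∏ x, c x) (k : ℕ) : ‖twistedPow c μ k‖ = 1 := by
  have hμ1 : ‖μ‖ = 1 := by
    refine (pow_eq_one_iff_of_nonneg (norm_nonneg μ) (NeZero.ne n)).1 ?_
    rw [← norm_pow, hμ, norm_prod]
    simp [hc]
  simp [twistedPow, norm_prod, hc, hμ1]

end TwistedPow

theorem stmt8 (n : ℕ) [NeZero n] (s : ℕ) (hs : Nat.Coprime s n)
    (a : ZMod n → ℂ) (ha : ∀ i, ‖a i‖ = 1)
    (lam0 : ℂ) (hlam : lam0 ^ n = ∏ i, a i)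
    (B : Matrix (ZMod n) (ZMod n) ℂ)
    (hB : B = Matrix.diagonal fun k : ZMod n =>
      lam0 ^ k.val / ∏ l ∈ Finset.range k.val, a ((s : ZMod n) * l)) :
    Pmat n s * B * Fmat n ∈ Matrix.unitaryGroup (ZMod n) ℂ ∧
      (Pmat n s * B * Fmat n)ᴴ * (Matrix.diagonal a * Smat n ^ s) *
          (Pmat n s * B * Fmat n) =
        Matrix.diagonal fun j : ZMod n => omg n ^ j.val * lam0 := by
  set c : ZMod n → ℂ := fun x => a (s * x)
  replace hB : B = diagonal fun k => twistedPow c lam0 k.val := hB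
  replace hlam : lam0 ^ n = ∏ x, c x := by rw [hlam, ZMod.prod_comp_mul_left hs]
  have hU : Pmat n s * B * Fmat n ∈ unitaryGroup (ZMod n) ℂ := by
    refine mul_mem (mul_mem (Pmat_mem_unitaryGroup hs) ?_) (Fmat_mem_unitaryGroup n)
    exact hB ▸ diagonal_mem_unitaryGroup fun k => norm_twistedPow (fun x => ha _) hlam k.val
  have hcomm : diagonal a * Smat n ^ s * (Pmat n s * B * Fmat n) =
      Pmat n s * B * Fmat n * (lam0 • Rmat n) :=
    hB ▸ diagonal_mul_Smat_pow_mul_eq_mul_smul_Rmat a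
      (mul_twistedPow_val_add_one (fun x => norm_ne_zero_iff.1 (ha _ ▸ one_ne_zero)) hlam)
  refine ⟨hU, ?_⟩
  rw [Matrix.mul_assoc, hcomm, ← Matrix.mul_assoc, ← star_eq_conjTranspose,
    mem_unitaryGroup_iff'.1 hU, Matrix.one_mul, Rmat, ← diagonal_smul]
  exact congrArg diagonal (funext fun j => mul_comm _ _)
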